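/- arXiv:1807.05042 — 5 statements merged into one kernel-verified Lean document; each statement's English description precedes it below -/
import Mathlib

section
/- Let X, Y be Hilbert spaces, A, A_η : X → Y bounded linear operators with ‖A − A_η‖ ≤ η, and α > 0. Then ‖(A_η*A_η + αI)⁻¹ − (A*A + αI)⁻¹‖ ≤ η/α^{3/2}. (In fact, the bound with constant C = 1, i.e., ≤ C·η·α^{-3/2}, holds.) -/
/-!
Writing `T_A = (A*A + α)⁻¹`, the resolvent identity together with
`A*A - B*B = B*(A - B) + (A - B)*A` gives
`T_B - T_A = (T_B B*) (A - B) T_A + T_B (A - B)* (A T_A)`.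
Testing `(A*A + α) x = z` against `x` gives `‖A x‖² + α ‖x‖² = ⟪z, x⟫`, whence, by
Cauchy–Schwarz and AM–GM, `‖T_A‖ ≤ 1/α` and `‖A T_A‖, ‖T_A A*‖ ≤ 1/(2√α)`.
The two terms are therefore each at most `‖A - B‖ / (2 α √α)`.
-/

open ContinuousLinearMap

variable {X Y : Type*} [NormedAddCommGroup X] [InnerProductSpace ℝ X] [CompleteSpace X]
  [NormedAddCommGroup Y] [InnerProductSpace ℝ Y] [CompleteSpace Y]

noncomputable def tikhonovOp (A : X →L[ℝ] Y) (α : ℝ) : X →L[ℝ] X :=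
  adjoint A ∘L A + α • (1 : X →L[ℝ] X)

lemma adjoint_comp_self_sub_adjoint_comp_self (A B : X →L[ℝ] Y) :
    adjoint A ∘L A - adjoint B ∘L B = adjoint B ∘L (A - B) + adjoint (A - B) ∘L A := by
  simp only [comp_sub, map_sub, sub_comp]
  abel

section Tikhonov

variable (A : X →L[ℝ] Y) {α : ℝ}

lemma inner_tikhonovOp_apply_self (x : X) :
    inner ℝ (tikhonovOp A α x) x = ‖A x‖ ^ 2 + α * ‖x‖ ^ 2 := by
  simp [tikhonovOp, inner_add_left, real_inner_smul_left, adjoint_inner_left]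

lemma isUnit_tikhonovOp (hα : 0 < α) : IsUnit (tikhonovOp A α) := by
  refine isUnit_of_forall_le_norm_inner_map _ (c := α.toNNReal) (by simpa using hα) fun x => ?_
  rw [inner_tikhonovOp_apply_self, Real.norm_eq_abs, abs_of_nonneg (by positivity),
    Real.coe_toNNReal _ hα.le]
  nlinarith [sq_nonneg ‖A x‖]

lemma inner_inverse_tikhonovOp_apply (hα : 0 < α) (z : X) :
    inner ℝ z (Ring.inverse (tikhonovOp A α) z)
      = ‖A (Ring.inverse (tikhonovOp A α) z)‖ ^ 2
        + α * ‖Ring.inverse (tikhonovOp A α) z‖ ^ 2 := by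
  rw [← inner_tikhonovOp_apply_self, ← mul_apply_eq_comp,
    Ring.mul_inverse_cancel _ (isUnit_tikhonovOp A hα), one_apply_eq_self]

lemma norm_inverse_tikhonovOp_le (hα : 0 < α) : ‖Ring.inverse (tikhonovOp A α)‖ ≤ α⁻¹ := by
  refine opNorm_le_bound _ (by positivity) fun z => ?_
  set x := Ring.inverse (tikhonovOp A α) z
  have hx := inner_inverse_tikhonovOp_apply A hα z
  have hcs := real_inner_le_norm z x
  rw [inv_mul_eq_div, le_div_iff₀ hα]
  nlinarith [sq_nonneg ‖A x‖, norm_nonneg x, norm_nonneg z]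

lemma norm_comp_inverse_tikhonovOp_le (hα : 0 < α) :
    ‖A ∘L Ring.inverse (tikhonovOp A α)‖ ≤ (2 * √α)⁻¹ := by
  have hsqrt : √α ^ 2 = α := Real.sq_sqrt hα.le
  refine opNorm_le_bound _ (by positivity) fun z => ?_
  rw [comp_apply]
  set x := Ring.inverse (tikhonovOp A α) z
  have hx := inner_inverse_tikhonovOp_apply A hα z
  have hcs := real_inner_le_norm z x
  rw [inv_mul_eq_div, le_div_iff₀ (by positivity),
    ← pow_le_pow_iff_left₀ (by positivity) (norm_nonneg z) two_ne_zero]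
  nlinarith [sq_nonneg (‖z‖ - 2 * α * ‖x‖), norm_nonneg x]

lemma norm_inverse_tikhonovOp_comp_adjoint_le (hα : 0 < α) :
    ‖Ring.inverse (tikhonovOp A α) ∘L adjoint A‖ ≤ (2 * √α)⁻¹ := by
  have hsqrt : √α ^ 2 = α := Real.sq_sqrt hα.le
  refine opNorm_le_bound _ (by positivity) fun y => ?_
  rw [comp_apply]
  set x := Ring.inverse (tikhonovOp A α) (adjoint A y)
  have hx := inner_inverse_tikhonovOp_apply A hα (adjoint A y)
  rw [adjoint_inner_left] at hx
  have hcs := real_inner_le_norm y (A x)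
  rw [inv_mul_eq_div, le_div_iff₀ (by positivity),
    ← pow_le_pow_iff_left₀ (by positivity) (norm_nonneg y) two_ne_zero]
  nlinarith [sq_nonneg (2 * ‖A x‖ - ‖y‖), norm_nonneg x]

lemma inverse_tikhonovOp_sub_inverse_tikhonovOp (B : X →L[ℝ] Y) (hα : 0 < α) :
    Ring.inverse (tikhonovOp B α) - Ring.inverse (tikhonovOp A α)
      = (Ring.inverse (tikhonovOp B α) ∘L adjoint B) ∘L ((A - B) ∘L Ring.inverse (tikhonovOp A α))
        + (Ring.inverse (tikhonovOp B α) ∘L adjoint (A - B))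
          ∘L (A ∘L Ring.inverse (tikhonovOp A α)) := by
  have hdiff : tikhonovOp A α - tikhonovOp B α
      = adjoint B ∘L (A - B) + adjoint (A - B) ∘L A := by
    rw [← adjoint_comp_self_sub_adjoint_comp_self, tikhonovOp, tikhonovOp,
      add_sub_add_right_eq_sub]
  rw [Ring.inverse_sub_inverse (iff_of_true (isUnit_tikhonovOp B hα) (isUnit_tikhonovOp A hα)),
    hdiff]
  ext x
  simp only [mul_apply_eq_comp, add_apply, comp_apply, map_add]

lemma norm_inverse_tikhonovOp_sub_inverse_tikhonovOp_le (B : X →L[ℝ] Y) (hα : 0 < α) :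
    ‖Ring.inverse (tikhonovOp B α) - Ring.inverse (tikhonovOp A α)‖ ≤ ‖A - B‖ / (α * √α) := by
  have hfirst : ‖(Ring.inverse (tikhonovOp B α) ∘L adjoint B)
      ∘L ((A - B) ∘L Ring.inverse (tikhonovOp A α))‖ ≤ (2 * √α)⁻¹ * (‖A - B‖ * α⁻¹) := by
    grw [opNorm_comp_le _ ((A - B) ∘L _), opNorm_comp_le (A - B),
      norm_inverse_tikhonovOp_comp_adjoint_le B hα,
      norm_inverse_tikhonovOp_le A hα]
  have hsecond : ‖(Ring.inverse (tikhonovOp B α) ∘L adjoint (A - B))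
      ∘L (A ∘L Ring.inverse (tikhonovOp A α))‖ ≤ α⁻¹ * ‖A - B‖ * (2 * √α)⁻¹ := by
    grw [opNorm_comp_le _ (A ∘L _), opNorm_comp_le _ (adjoint (A - B)),
      norm_inverse_tikhonovOp_le B hα,
      LinearIsometryEquiv.norm_map, norm_comp_inverse_tikhonovOp_le A hα]
  calc _ ≤ (2 * √α)⁻¹ * (‖A - B‖ * α⁻¹) + α⁻¹ * ‖A - B‖ * (2 * √α)⁻¹ := by
        rw [inverse_tikhonovOp_sub_inverse_tikhonovOp A B hα]
        exact (norm_add_le _ _).trans (add_le_add hfirst hsecond)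
    _ = ‖A - B‖ / (α * √α) := by field_simp; ring

end Tikhonov

theorem stmt_3 (A Aη : X →L[ℝ] Y) (η : ℝ) (hη : ‖A - Aη‖ ≤ η) (α : ℝ) (hα : 0 < α) :
    ‖Ring.inverse (adjoint Aη ∘L Aη + α • (1 : X →L[ℝ] X)) -
        Ring.inverse (adjoint A ∘L A + α • (1 : X →L[ℝ] X))‖ ≤ η / α ^ ((3 : ℝ) / 2) := by
  have hpow : α ^ ((3 : ℝ) / 2) = α * √α := by
    rw [Real.sqrt_eq_rpow, ← Real.rpow_one_add' hα.le (by norm_num)]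
    norm_num
  rw [hpow]
  calc _ ≤ ‖A - Aη‖ / (α * √α) := norm_inverse_tikhonovOp_sub_inverse_tikhonovOp_le A Aη hα
    _ ≤ η / (α * √α) := by gcongr
end

section
/- Let X, Y be Hilbert spaces, A, A_η : X → Y bounded with ‖A − A_η‖ ≤ η, and α > 0. Then ‖(A_η*A_η + αI)⁻¹ A_η* − (A*A + αI)⁻¹ A*‖ ≤ (5/4)·η/α. -/
/-!
Pushing `A*` through the resolvent, `(A*A + α)⁻¹A* = A*(AA* + α)⁻¹`, and writing `R = (B*B + α)⁻¹`,
`R B* - (A*A + α)⁻¹A* = R (B*(AA* + α) - (B*B + α)A*) (AA* + α)⁻¹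
  = (R B*) (A - B) ((A*A + α)⁻¹A*) + α R (B - A)* (AA* + α)⁻¹`.
With `‖A - B‖ ≤ η`, `‖(A*A + α)⁻¹A*‖ ≤ 1/(2√α)` and `‖(A*A + α)⁻¹‖ ≤ 1/α` the two terms are bounded by
`η/(4α)` and `η/α`.
-/

open ContinuousLinearMap Filter

variable {X Y : Type*} [NormedAddCommGroup X] [InnerProductSpace ℝ X] [CompleteSpace X]
  [NormedAddCommGroup Y] [InnerProductSpace ℝ Y] [CompleteSpace Y]

theorem ContinuousLinearMap.inverse_comp_sub_comp_inverse {R M N : Type*} [Ring R]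
    [TopologicalSpace M] [AddCommGroup M] [Module R M] [IsTopologicalAddGroup M]
    [TopologicalSpace N] [AddCommGroup N] [Module R N] [IsTopologicalAddGroup N]
    {P : M →L[R] M} {Q : N →L[R] N} (hP : IsUnit P) (hQ : IsUnit Q) (B C : N →L[R] M) :
    Ring.inverse P ∘L B - C ∘L Ring.inverse Q =
      Ring.inverse P ∘L (B ∘L Q - P ∘L C) ∘L Ring.inverse Q := by
  have hPP : Ring.inverse P ∘L P = .id R M := Ring.inverse_mul_cancel P hP
  have hQQ : Q ∘L Ring.inverse Q = .id R N := Ring.mul_inverse_cancel Q hQ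
  rw [sub_comp, comp_sub, comp_assoc, hQQ, comp_id, ← comp_assoc, ← comp_assoc, hPP, id_comp]

theorem ContinuousLinearMap.opNorm_comp_comp_le_of_le {𝕜 E F G H : Type*}
    [NontriviallyNormedField 𝕜] [SeminormedAddCommGroup E] [NormedSpace 𝕜 E]
    [SeminormedAddCommGroup F] [NormedSpace 𝕜 F] [SeminormedAddCommGroup G] [NormedSpace 𝕜 G]
    [SeminormedAddCommGroup H] [NormedSpace 𝕜 H]
    {f : G →L[𝕜] H} {g : F →L[𝕜] G} {h : E →L[𝕜] F} {a b c : ℝ}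
    (hf : ‖f‖ ≤ a) (hg : ‖g‖ ≤ b) (hh : ‖h‖ ≤ c) : ‖f ∘L g ∘L h‖ ≤ a * (b * c) := by
  have hb : 0 ≤ b := (norm_nonneg g).trans hg
  calc ‖f ∘L g ∘L h‖ ≤ ‖f‖ * (‖g‖ * ‖h‖) :=
        (opNorm_comp_le f _).trans (by gcongr; exact opNorm_comp_le g h)
    _ ≤ a * (b * c) := by gcongr; exact (norm_nonneg f).trans hf

namespace ContinuousLinearMap

open scoped InnerProductSpace

noncomputable def regGram (A : X →L[ℝ] Y) (α : ℝ) : X →L[ℝ] X := adjoint A ∘L A + α • 1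

theorem inner_regGram_apply_self (A : X →L[ℝ] Y) (α : ℝ) (x : X) :
    ⟪regGram A α x, x⟫_ℝ = ‖A x‖ ^ 2 + α * ‖x‖ ^ 2 := by
  simp [regGram, inner_add_left, adjoint_inner_left, real_inner_smul_left]

theorem isUnit_regGram (A : X →L[ℝ] Y) {α : ℝ} (hα : 0 < α) : IsUnit (regGram A α) := by
  have hB : IsCoercive ((innerSL ℝ).comp (regGram A α)) := by
    refine ⟨α, hα, fun x => ?_⟩
    have : ((innerSL ℝ).comp (regGram A α)) x x = ‖A x‖ ^ 2 + α * ‖x‖ ^ 2 :=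
      inner_regGram_apply_self A α x
    nlinarith [sq_nonneg ‖A x‖]
  refine ⟨hB.continuousLinearEquivOfBilin.toUnit, ?_⟩
  ext x
  exact (hB.unique_continuousLinearEquivOfBilin fun _ => rfl).symm

theorem regGram_apply_inverse (A : X →L[ℝ] Y) {α : ℝ} (hα : 0 < α) (x : X) :
    regGram A α (Ring.inverse (regGram A α) x) = x := by
  rw [← mul_apply_eq_comp, Ring.mul_inverse_cancel _ (isUnit_regGram A hα), one_apply_eq_self]

theorem norm_inverse_regGram_le (A : X →L[ℝ] Y) {α : ℝ} (hα : 0 < α) :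
    ‖Ring.inverse (regGram A α)‖ ≤ α⁻¹ := by
  refine opNorm_le_bound _ (by positivity) fun y => ?_
  set x := Ring.inverse (regGram A α) y
  have hx : α * ‖x‖ ^ 2 ≤ ‖y‖ * ‖x‖ := by
    have := inner_regGram_apply_self A α x
    rw [regGram_apply_inverse A hα] at this
    nlinarith [real_inner_le_norm y x, sq_nonneg ‖A x‖]
  have hαx : α * ‖x‖ ≤ ‖y‖ := by
    rcases (norm_nonneg x).eq_or_lt with h | h
    · rw [← h, mul_zero]; exact norm_nonneg y
    · exact le_of_mul_le_mul_right (by nlinarith) h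
  rwa [inv_mul_eq_div, le_div_iff₀ hα, mul_comm]

theorem norm_inverse_regGram_comp_adjoint_le (A : X →L[ℝ] Y) {α : ℝ} (hα : 0 < α) :
    ‖Ring.inverse (regGram A α) ∘L adjoint A‖ ≤ (2 * √α)⁻¹ := by
  refine opNorm_le_bound _ (by positivity) fun y => ?_
  set x := Ring.inverse (regGram A α) (adjoint A y)
  have hx : ‖A x‖ ^ 2 + α * ‖x‖ ^ 2 ≤ ‖y‖ * ‖A x‖ := by
    rw [← inner_regGram_apply_self, regGram_apply_inverse A hα, adjoint_inner_left]
    exact real_inner_le_norm y (A x)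
  -- completing the square in `‖A x‖`
  have hsq : (2 * √α * ‖x‖) ^ 2 ≤ ‖y‖ ^ 2 := by
    rw [mul_pow, mul_pow, Real.sq_sqrt hα.le]
    nlinarith [sq_nonneg (2 * ‖A x‖ - ‖y‖)]
  have hs : 0 < 2 * √α := by positivity
  rw [comp_apply, inv_mul_eq_div, le_div_iff₀ hs, mul_comm]
  exact (pow_le_pow_iff_left₀ (by positivity) (norm_nonneg y) two_ne_zero).mp hsq

theorem adjoint_comp_regGram_adjoint_sub (A B : X →L[ℝ] Y) (α : ℝ) :
    adjoint B ∘L regGram (adjoint A) α - regGram B α ∘L adjoint A =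
      adjoint B ∘L (A - B) ∘L adjoint A + α • adjoint (B - A) := by
  simp only [regGram, adjoint_adjoint, map_sub, comp_add, add_comp, comp_sub, sub_comp,
    comp_smul, smul_comp, smul_sub, comp_assoc, one_def, id_comp, comp_id]
  abel

theorem inverse_regGram_comp_adjoint (A : X →L[ℝ] Y) {α : ℝ} (hα : 0 < α) :
    Ring.inverse (regGram A α) ∘L adjoint A =
      adjoint A ∘L Ring.inverse (regGram (adjoint A) α) := by
  -- the case `B = A` of `adjoint_comp_regGram_adjoint_sub`, whose right side vanishes
  rw [← sub_eq_zero, inverse_comp_sub_comp_inverse (isUnit_regGram A hα)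
    (isUnit_regGram (adjoint A) hα), adjoint_comp_regGram_adjoint_sub]
  simp

theorem inverse_regGram_comp_adjoint_sub (A B : X →L[ℝ] Y) {α : ℝ} (hα : 0 < α) :
    Ring.inverse (regGram B α) ∘L adjoint B - Ring.inverse (regGram A α) ∘L adjoint A =
      (Ring.inverse (regGram B α) ∘L adjoint B) ∘L (A - B) ∘L
          (Ring.inverse (regGram A α) ∘L adjoint A) +
        α • (Ring.inverse (regGram B α) ∘L adjoint (B - A) ∘L
          Ring.inverse (regGram (adjoint A) α)) := by
  rw [inverse_regGram_comp_adjoint A hα, inverse_comp_sub_comp_inverse (isUnit_regGram B hα)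
    (isUnit_regGram (adjoint A) hα), adjoint_comp_regGram_adjoint_sub]
  simp only [comp_add, add_comp, comp_smul, smul_comp, comp_assoc]

end ContinuousLinearMap

theorem stmt_4 (A Aη : X →L[ℝ] Y) (η : ℝ) (hη : ‖A - Aη‖ ≤ η) (α : ℝ) (hα : 0 < α) :
    ‖Ring.inverse (adjoint Aη ∘L Aη + α • (1 : X →L[ℝ] X)) ∘L adjoint Aη -
        Ring.inverse (adjoint A ∘L A + α • (1 : X →L[ℝ] X)) ∘L adjoint A‖ ≤
      5 / 4 * η / α := by
  change ‖Ring.inverse (regGram Aη α) ∘L adjoint Aη -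
    Ring.inverse (regGram A α) ∘L adjoint A‖ ≤ _
  rw [inverse_regGram_comp_adjoint_sub A Aη hα]
  have hη' : ‖adjoint (Aη - A)‖ ≤ η := by rwa [LinearIsometryEquiv.norm_map, norm_sub_rev]
  have h₁ := opNorm_comp_comp_le_of_le (norm_inverse_regGram_comp_adjoint_le Aη hα) hη
    (norm_inverse_regGram_comp_adjoint_le A hα)
  have h₂ := opNorm_comp_comp_le_of_le (norm_inverse_regGram_le Aη hα) hη'
    (norm_inverse_regGram_le (adjoint A) hα)
  calc _ ≤ _ + α * _ := (norm_add_le _ _).trans_eq (by rw [norm_smul, Real.norm_of_nonneg hα.le])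
    _ ≤ (2 * √α)⁻¹ * (η * (2 * √α)⁻¹) + α * (α⁻¹ * (η * α⁻¹)) := by gcongr
    _ = 5 / 4 * η / α := by
      field_simp
      rw [Real.sq_sqrt hα.le]
      ring
end

section
/- Let X, Y be Hilbert spaces, A, A_η : X → Y bounded with ‖A − A_η‖ ≤ η, and α > 0. Then ‖(A_η*A_η + αI)⁻¹ A_η*A_η − (A*A + αI)⁻¹ A*A‖ ≤ η/√α. -/
open ContinuousLinearMap Filter

variable {X Y : Type*} [NormedAddCommGroup X] [InnerProductSpace ℝ X] [CompleteSpace X]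
  [NormedAddCommGroup Y] [InnerProductSpace ℝ Y] [CompleteSpace Y]

/-!
Write `R_A = (A*A + α)⁻¹`. Since `R_A A*A = 1 - α R_A`, the difference in question is
`α (R_A - R_{A_η})`, and the resolvent identity gives
`R_A - R_{A_η} = R_A A* (A_η - A) R_{A_η} + R_A (A_η - A)* A_η R_{A_η}`.
Every bound comes from `⟪(A*A + α) x, x⟫ = ‖A x‖² + α ‖x‖²`: it gives `‖R_A‖ ≤ 1/α` and, by AM–GM,
`‖R_A A*‖, ‖A R_A‖ ≤ 1/(2√α)`, so each of the two terms has norm at most `η / (2 α √α)`.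
-/

open scoped InnerProductSpace

theorem two_mul_sqrt_mul_le_of_sq_add_mul_sq_le {a b c α : ℝ} (hα : 0 ≤ α) (hb : 0 ≤ b)
    (hc : 0 ≤ c) (h : a ^ 2 + α * b ^ 2 ≤ c * a) : 2 * √α * b ≤ c := by
  have hsq : (2 * √α * b) ^ 2 ≤ c ^ 2 := by
    rw [mul_pow, mul_pow, Real.sq_sqrt hα]
    -- `4 α b² ≤ 4 a (c - a) ≤ c²`
    nlinarith [sq_nonneg (c - 2 * a)]
  exact (pow_le_pow_iff_left₀ (by positivity) hc two_ne_zero).mp hsq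

namespace ContinuousLinearMap

noncomputable def tikhonov (A : X →L[ℝ] Y) (α : ℝ) : X →L[ℝ] X := adjoint A ∘L A + α • 1

section Tikhonov

variable (A : X →L[ℝ] Y) {α : ℝ}

theorem inner_tikhonov_apply_self (x : X) :
    ⟪tikhonov A α x, x⟫_ℝ = ‖A x‖ ^ 2 + α * ‖x‖ ^ 2 := by
  simp [tikhonov, inner_add_left, adjoint_inner_left, real_inner_smul_left]

theorem isUnit_tikhonov (hα : 0 < α) : IsUnit (tikhonov A α) := by
  refine isUnit_of_forall_le_norm_inner_map _ (Real.toNNReal_pos.mpr hα) fun x => ?_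
  rw [inner_tikhonov_apply_self, Real.coe_toNNReal _ hα.le, Real.norm_of_nonneg (by positivity)]
  nlinarith [sq_nonneg ‖A x‖]

theorem inner_inverse_tikhonov_apply (hα : 0 < α) (z : X) :
    ⟪z, Ring.inverse (tikhonov A α) z⟫_ℝ =
      ‖A (Ring.inverse (tikhonov A α) z)‖ ^ 2 + α * ‖Ring.inverse (tikhonov A α) z‖ ^ 2 := by
  have hz : tikhonov A α (Ring.inverse (tikhonov A α) z) = z := by
    simpa using DFunLike.congr_fun (Ring.mul_inverse_cancel _ (isUnit_tikhonov A hα)) z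
  rw [← inner_tikhonov_apply_self, hz]

theorem norm_inverse_tikhonov_le (hα : 0 < α) : ‖Ring.inverse (tikhonov A α)‖ ≤ α⁻¹ := by
  refine opNorm_le_bound _ (by positivity) fun z => ?_
  set x := Ring.inverse (tikhonov A α) z
  have h : (α * ‖x‖) ^ 2 ≤ ‖z‖ * (α * ‖x‖) := by
    have := (inner_inverse_tikhonov_apply A hα z).symm.trans_le (real_inner_le_norm z x)
    nlinarith [sq_nonneg ‖A x‖]
  rw [inv_mul_eq_div, le_div_iff₀ hα]
  nlinarith [norm_nonneg z, norm_nonneg x]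

theorem norm_comp_inverse_tikhonov_le (hα : 0 < α) :
    ‖A ∘L Ring.inverse (tikhonov A α)‖ ≤ (2 * √α)⁻¹ := by
  refine opNorm_le_bound _ (by positivity) fun z => ?_
  set x := Ring.inverse (tikhonov A α) z
  have h : (α * ‖x‖) ^ 2 + α * ‖A x‖ ^ 2 ≤ ‖z‖ * (α * ‖x‖) := by
    have := (inner_inverse_tikhonov_apply A hα z).symm.trans_le (real_inner_le_norm z x)
    nlinarith
  rw [comp_apply, inv_mul_eq_div, le_div_iff₀ (by positivity), mul_comm]
  exact two_mul_sqrt_mul_le_of_sq_add_mul_sq_le hα.le (norm_nonneg _) (norm_nonneg z) h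

theorem norm_inverse_tikhonov_comp_adjoint_le (hα : 0 < α) :
    ‖Ring.inverse (tikhonov A α) ∘L adjoint A‖ ≤ (2 * √α)⁻¹ := by
  refine opNorm_le_bound _ (by positivity) fun y => ?_
  set x := Ring.inverse (tikhonov A α) (adjoint A y)
  have h : ‖A x‖ ^ 2 + α * ‖x‖ ^ 2 ≤ ‖y‖ * ‖A x‖ := by
    rw [← inner_inverse_tikhonov_apply A hα, adjoint_inner_left]
    exact real_inner_le_norm y (A x)
  rw [comp_apply, inv_mul_eq_div, le_div_iff₀ (by positivity), mul_comm]
  exact two_mul_sqrt_mul_le_of_sq_add_mul_sq_le hα.le (norm_nonneg _) (norm_nonneg y) h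

theorem inverse_tikhonov_comp_gram (hα : 0 < α) :
    Ring.inverse (tikhonov A α) ∘L (adjoint A ∘L A) = 1 - α • Ring.inverse (tikhonov A α) := by
  have hgram : adjoint A ∘L A = tikhonov A α - α • 1 := by rw [tikhonov, add_sub_cancel_right]
  rw [hgram, ← mul_def, mul_sub, mul_smul_comm, mul_one,
    Ring.inverse_mul_cancel _ (isUnit_tikhonov A hα)]

end Tikhonov

theorem tikhonov_sub_tikhonov (A B : X →L[ℝ] Y) (α : ℝ) :
    tikhonov B α - tikhonov A α = adjoint A ∘L (B - A) + adjoint (B - A) ∘L B := by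
  simp only [tikhonov, map_sub, comp_sub, sub_comp]
  abel

theorem norm_inverse_tikhonov_sub_inverse_tikhonov_le (A B : X →L[ℝ] Y) {α : ℝ} (hα : 0 < α) :
    ‖Ring.inverse (tikhonov A α) - Ring.inverse (tikhonov B α)‖ ≤ ‖B - A‖ / (α * √α) := by
  set RA := Ring.inverse (tikhonov A α)
  set RB := Ring.inverse (tikhonov B α)
  have hsplit :
      RA - RB = (RA ∘L adjoint A) ∘L (B - A) ∘L RB + RA ∘L adjoint (B - A) ∘L (B ∘L RB) := by
    rw [Ring.inverse_sub_inverse (by simp only [isUnit_tikhonov _ hα]), tikhonov_sub_tikhonov]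
    simp only [RA, RB, mul_def, add_comp, comp_add, comp_assoc]
  have h1 : ‖(RA ∘L adjoint A) ∘L (B - A) ∘L RB‖ ≤ (2 * √α)⁻¹ * (‖B - A‖ * α⁻¹) :=
    (opNorm_comp_le _ _).trans <| mul_le_mul (norm_inverse_tikhonov_comp_adjoint_le A hα)
      ((opNorm_comp_le _ _).trans (by gcongr; exact norm_inverse_tikhonov_le B hα))
      (norm_nonneg _) (by positivity)
  have h2 : ‖RA ∘L adjoint (B - A) ∘L (B ∘L RB)‖ ≤ α⁻¹ * (‖B - A‖ * (2 * √α)⁻¹) :=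
    (opNorm_comp_le _ _).trans <| mul_le_mul (norm_inverse_tikhonov_le A hα)
      ((opNorm_comp_le _ _).trans (by
        rw [LinearIsometryEquiv.norm_map]; gcongr; exact norm_comp_inverse_tikhonov_le B hα))
      (norm_nonneg _) (by positivity)
  calc ‖RA - RB‖ ≤ (2 * √α)⁻¹ * (‖B - A‖ * α⁻¹) + α⁻¹ * (‖B - A‖ * (2 * √α)⁻¹) := by
        rw [hsplit]; exact (norm_add_le _ _).trans (add_le_add h1 h2)
    _ = ‖B - A‖ / (α * √α) := by field_simp; ring

end ContinuousLinearMap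

theorem stmt_5 (A Aη : X →L[ℝ] Y) (η : ℝ) (hη : ‖A - Aη‖ ≤ η) (α : ℝ) (hα : 0 < α) :
    ‖Ring.inverse (adjoint Aη ∘L Aη + α • (1 : X →L[ℝ] X)) ∘L (adjoint Aη ∘L Aη) -
        Ring.inverse (adjoint A ∘L A + α • (1 : X →L[ℝ] X)) ∘L (adjoint A ∘L A)‖ ≤
      η / Real.sqrt α := by
  change ‖Ring.inverse (tikhonov Aη α) ∘L (adjoint Aη ∘L Aη) -
    Ring.inverse (tikhonov A α) ∘L (adjoint A ∘L A)‖ ≤ η / √α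
  rw [inverse_tikhonov_comp_gram Aη hα, inverse_tikhonov_comp_gram A hα,
    sub_sub_sub_cancel_left, ← smul_sub, norm_smul, Real.norm_of_nonneg hα.le]
  calc α * ‖Ring.inverse (tikhonov A α) - Ring.inverse (tikhonov Aη α)‖
      ≤ α * (η / (α * √α)) := by
        gcongr
        exact (norm_inverse_tikhonov_sub_inverse_tikhonov_le A Aη hα).trans
          (by gcongr; rwa [norm_sub_rev])
    _ = η / √α := by field_simp
end

section
/- Let X, Y be Hilbert spaces, A, A_η : X → Y bounded with ‖A − A_η‖ ≤ η, α > 0, y_δ, y ∈ Y with ‖y_δ − y‖ ≤ δ, and suppose the noise condition ‖(A*A + αI)⁻¹A*(y_δ − y)‖ ≤ C_nc ψ(α, A, y_δ − y) holds, where ψ(α, A, z) = ‖√α (AA* + αI)⁻¹ z‖ (heuristic discrepancy). Then ‖(A_η*A_η + αI)⁻¹ A_η*(y_δ − y)‖ ≤ (5/4)·ηδ/α + C_nc·ψ(α, A, y_δ − y). -/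
open ContinuousLinearMap Filter RealInnerProductSpace

variable {X Y : Type*} [NormedAddCommGroup X] [InnerProductSpace ℝ X] [CompleteSpace X]
  [NormedAddCommGroup Y] [InnerProductSpace ℝ Y] [CompleteSpace Y]

lemma aux_isUnit (B : X →L[ℝ] Y) (α : ℝ) (hα : 0 < α) :
    IsUnit (adjoint B ∘L B + α • (1 : X →L[ℝ] X)) := by
  set T : X →L[ℝ] X := adjoint B ∘L B + α • (1 : X →L[ℝ] X) with hT
  have hb : IsCoercive ((innerSL ℝ).comp T) := by
    refine ⟨α, hα, fun u => ?_⟩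
    have : (innerSL ℝ).comp T u u = ‖B u‖ ^ 2 + α * ‖u‖ ^ 2 := by
      simp [hT, adjoint_inner_left, real_inner_self_eq_norm_sq]
    rw [this]
    nlinarith [sq_nonneg ‖B u‖, norm_nonneg u]
  have hTE : (hb.continuousLinearEquivOfBilin : X →L[ℝ] X) = T := by
    ext u
    refine ext_inner_right ℝ fun w => ?_
    have := hb.continuousLinearEquivOfBilin_apply u w
    simpa using this
  rw [← hTE]
  exact ⟨hb.continuousLinearEquivOfBilin.toUnit, rfl⟩

lemma aux_apply_inv (B : X →L[ℝ] Y) (α : ℝ) (hα : 0 < α) (x : X) :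
    (adjoint B ∘L B + α • (1 : X →L[ℝ] X))
      (Ring.inverse (adjoint B ∘L B + α • (1 : X →L[ℝ] X)) x) = x := by
  have h := Ring.mul_inverse_cancel _ (aux_isUnit B α hα)
  have := congrArg (fun f : X →L[ℝ] X => f x) h
  simpa [ContinuousLinearMap.mul_apply] using this

lemma aux_inner_self (B : X →L[ℝ] Y) (α : ℝ) (u : X) :
    ⟪(adjoint B ∘L B + α • (1 : X →L[ℝ] X)) u, u⟫ = ‖B u‖ ^ 2 + α * ‖u‖ ^ 2 := by
  simp [inner_add_left, adjoint_inner_left, real_inner_smul_left,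
    real_inner_self_eq_norm_sq]

lemma aux_norm_inv (B : X →L[ℝ] Y) (α : ℝ) (hα : 0 < α) (x : X) :
    ‖Ring.inverse (adjoint B ∘L B + α • (1 : X →L[ℝ] X)) x‖ ≤ ‖x‖ / α := by
  set u := Ring.inverse (adjoint B ∘L B + α • (1 : X →L[ℝ] X)) x with hu
  have hTu : (adjoint B ∘L B + α • (1 : X →L[ℝ] X)) u = x := aux_apply_inv B α hα x
  have h1 : ‖B u‖ ^ 2 + α * ‖u‖ ^ 2 = ⟪x, u⟫ := by
    rw [← hTu, aux_inner_self]
  have h2 : ⟪x, u⟫ ≤ ‖x‖ * ‖u‖ := real_inner_le_norm x u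
  rw [le_div_iff₀ hα]
  nlinarith [sq_nonneg ‖B u‖, norm_nonneg u, norm_nonneg x, sq_nonneg (‖u‖ * α - ‖x‖)]

lemma aux_norm_inv_adj (B : X →L[ℝ] Y) (α : ℝ) (hα : 0 < α) (y : Y) :
    ‖Ring.inverse (adjoint B ∘L B + α • (1 : X →L[ℝ] X)) (adjoint B y)‖ ≤
      ‖y‖ / (2 * Real.sqrt α) := by
  set u := Ring.inverse (adjoint B ∘L B + α • (1 : X →L[ℝ] X)) (adjoint B y) with hu
  have hTu : (adjoint B ∘L B + α • (1 : X →L[ℝ] X)) u = adjoint B y :=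
    aux_apply_inv B α hα _
  have h1 : ‖B u‖ ^ 2 + α * ‖u‖ ^ 2 = ⟪y, B u⟫ := by
    rw [← adjoint_inner_left, ← hTu, aux_inner_self]
  have h2 : ⟪y, B u⟫ ≤ ‖y‖ * ‖B u‖ := real_inner_le_norm _ _
  have key : α * ‖u‖ ^ 2 ≤ ‖y‖ ^ 2 / 4 := by nlinarith [sq_nonneg (‖B u‖ - ‖y‖ / 2)]
  have hs : (0:ℝ) < Real.sqrt α := Real.sqrt_pos.2 hα
  have hc : (0:ℝ) ≤ ‖y‖ / (2 * Real.sqrt α) := by positivity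
  have hsq : ‖u‖ ^ 2 ≤ (‖y‖ / (2 * Real.sqrt α)) ^ 2 := by
    rw [div_pow, mul_pow, Real.sq_sqrt hα.le, le_div_iff₀ (by positivity)]
    nlinarith
  have := Real.sqrt_le_sqrt hsq
  rwa [Real.sqrt_sq (norm_nonneg u), Real.sqrt_sq hc] at this

lemma aux_norm_B_inv (B : X →L[ℝ] Y) (α : ℝ) (hα : 0 < α) (x : X) :
    ‖B (Ring.inverse (adjoint B ∘L B + α • (1 : X →L[ℝ] X)) x)‖ ≤
      ‖x‖ / (2 * Real.sqrt α) := by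
  set u := Ring.inverse (adjoint B ∘L B + α • (1 : X →L[ℝ] X)) x with hu
  have hTu : (adjoint B ∘L B + α • (1 : X →L[ℝ] X)) u = x := aux_apply_inv B α hα x
  have h1 : ‖B u‖ ^ 2 + α * ‖u‖ ^ 2 = ⟪x, u⟫ := by
    rw [← hTu, aux_inner_self]
  have h2 : ⟪x, u⟫ ≤ ‖x‖ * ‖u‖ := real_inner_le_norm _ _
  have hs : (0:ℝ) < Real.sqrt α := Real.sqrt_pos.2 hα
  have hss : Real.sqrt α * Real.sqrt α = α := Real.mul_self_sqrt hα.le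
  have key : ‖B u‖ ^ 2 ≤ (‖x‖ / (2 * Real.sqrt α)) ^ 2 := by
    rw [div_pow, mul_pow, le_div_iff₀ (by positivity)]
    nlinarith [sq_nonneg (Real.sqrt α * Real.sqrt α * ‖u‖ - ‖x‖ / 2 * Real.sqrt α),
      sq_nonneg (α * ‖u‖ - ‖x‖ / 2)]
  have hc : (0:ℝ) ≤ ‖x‖ / (2 * Real.sqrt α) := by positivity
  have := Real.sqrt_le_sqrt key
  rwa [Real.sqrt_sq (norm_nonneg _), Real.sqrt_sq hc] at this

lemma aux_inv_apply (B : X →L[ℝ] Y) (α : ℝ) (hα : 0 < α) (x : X) :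
    Ring.inverse (adjoint B ∘L B + α • (1 : X →L[ℝ] X))
      ((adjoint B ∘L B + α • (1 : X →L[ℝ] X)) x) = x := by
  have h := Ring.inverse_mul_cancel _ (aux_isUnit B α hα)
  have := congrArg (fun f : X →L[ℝ] X => f x) h
  simpa [ContinuousLinearMap.mul_apply] using this

set_option maxHeartbeats 1000000 in
theorem stmt_15 (A Aη : X →L[ℝ] Y) (η : ℝ) (hη : ‖A - Aη‖ ≤ η) (α : ℝ) (hα : 0 < α)
    (y yδ : Y) (δ : ℝ) (hδ : ‖yδ - y‖ ≤ δ) (Cnc : ℝ) (hC : 0 < Cnc)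
    (hnc : ‖(Ring.inverse (adjoint A ∘L A + α • (1 : X →L[ℝ] X))) (adjoint A (yδ - y))‖ ≤
      Cnc * (Real.sqrt α *
        ‖(Ring.inverse (A ∘L adjoint A + α • (1 : Y →L[ℝ] Y))) (yδ - y)‖)) :
    ‖(Ring.inverse (adjoint Aη ∘L Aη + α • (1 : X →L[ℝ] X))) (adjoint Aη (yδ - y))‖ ≤
      5 / 4 * η * δ / α +
        Cnc * (Real.sqrt α *
          ‖(Ring.inverse (A ∘L adjoint A + α • (1 : Y →L[ℝ] Y))) (yδ - y)‖) := by
  have hη0 : 0 ≤ η := le_trans (norm_nonneg _) hη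
  have hδ0 : 0 ≤ δ := le_trans (norm_nonneg _) hδ
  have hs : (0:ℝ) < Real.sqrt α := Real.sqrt_pos.2 hα
  have hss : Real.sqrt α * Real.sqrt α = α := Real.mul_self_sqrt hα.le
  set z : Y := yδ - y with hz
  set S : Y →L[ℝ] Y := A ∘L adjoint A + α • (1 : Y →L[ℝ] Y) with hS
  set Bη : X →L[ℝ] X := adjoint Aη ∘L Aη + α • (1 : X →L[ℝ] X) with hBη
  set B : X →L[ℝ] X := adjoint A ∘L A + α • (1 : X →L[ℝ] X) with hB
  have hSA : S = adjoint (adjoint A) ∘L adjoint A + α • (1 : Y →L[ℝ] Y) := by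
    rw [adjoint_adjoint]
  set w : Y := Ring.inverse S z with hw
  set u : X := Ring.inverse Bη (adjoint Aη z) with hu
  -- S w = z
  have hSw : S w = z := by
    rw [hw, hSA]; exact aux_apply_inv (adjoint A) α hα z
  -- norm facts about w
  have hnw : ‖w‖ ≤ δ / α := by
    refine le_trans ?_ ((div_le_div_iff_of_pos_right hα).2 hδ)
    rw [hw, hSA]; exact aux_norm_inv (adjoint A) α hα z
  have hnAw : ‖adjoint A w‖ ≤ δ / (2 * Real.sqrt α) := by
    refine le_trans ?_ ((div_le_div_iff_of_pos_right (by positivity)).2 hδ)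
    rw [hw, hSA]; exact aux_norm_B_inv (adjoint A) α hα z
  -- A* w = Ring.inverse B (A* z)
  have hAwB : adjoint A w = Ring.inverse B (adjoint A z) := by
    have hBA : B (adjoint A w) = adjoint A z := by
      conv_rhs => rw [← hSw]
      rw [hB, hS]
      rw [ContinuousLinearMap.add_apply, ContinuousLinearMap.add_apply,
        ContinuousLinearMap.coe_comp', Function.comp_apply,
        ContinuousLinearMap.coe_comp', Function.comp_apply,
        ContinuousLinearMap.smul_apply, ContinuousLinearMap.smul_apply,
        ContinuousLinearMap.one_apply, ContinuousLinearMap.one_apply,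
        map_add, map_smul]
    rw [← hBA, hB]
    exact (aux_inv_apply A α hα _).symm
  have hnc' : ‖adjoint A w‖ ≤ Cnc * (Real.sqrt α * ‖w‖) := by rw [hAwB]; exact hnc
  -- key identity
  set v : Y := (A - Aη) (adjoint A w) with hv
  set d : X := adjoint Aη v + α • ((adjoint Aη - adjoint A) w) with hd
  have hBid : Bη (u - adjoint A w) = d := by
    have h1 : Bη u = adjoint Aη z := aux_apply_inv Aη α hα _
    have h2 : z = A (adjoint A w) + α • w := by
      conv_lhs => rw [← hSw]
      rw [hS, ContinuousLinearMap.add_apply, ContinuousLinearMap.coe_comp',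
        Function.comp_apply, ContinuousLinearMap.smul_apply, ContinuousLinearMap.one_apply]
    have e2 : Bη (adjoint A w) = adjoint Aη (Aη (adjoint A w)) + α • (adjoint A w) := by
      rw [hBη, ContinuousLinearMap.add_apply, ContinuousLinearMap.coe_comp',
        Function.comp_apply, ContinuousLinearMap.smul_apply, ContinuousLinearMap.one_apply]
    have e3 : adjoint Aη v = adjoint Aη (A (adjoint A w)) - adjoint Aη (Aη (adjoint A w)) := by
      rw [hv, ContinuousLinearMap.sub_apply, map_sub]
    have e4 : (adjoint Aη - adjoint A) w = adjoint Aη w - adjoint A w :=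
      ContinuousLinearMap.sub_apply _ _ _
    rw [map_sub, h1, h2, map_add, map_smul, e2, hd, e3, e4, smul_sub]
    abel
  have hid : u = Ring.inverse Bη d + adjoint A w := by
    have h5 := congrArg (⇑(Ring.inverse Bη)) hBid
    rw [hBη, aux_inv_apply Aη α hα, ← hBη] at h5
    rw [← h5]; abel
  -- bound the two pieces of Ring.inverse Bη d
  have hsplit : Ring.inverse Bη d =
      Ring.inverse Bη (adjoint Aη v) + α • Ring.inverse Bη ((adjoint Aη - adjoint A) w) := by
    rw [hd, map_add, map_smul]
  have hb1 : ‖Ring.inverse Bη (adjoint Aη v)‖ ≤ η * δ / (4 * α) := by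
    have h1 : ‖Ring.inverse Bη (adjoint Aη v)‖ ≤ ‖v‖ / (2 * Real.sqrt α) := by
      rw [hBη]; exact aux_norm_inv_adj Aη α hα v
    have h2 : ‖v‖ ≤ η * (δ / (2 * Real.sqrt α)) := by
      rw [hv]
      calc ‖(A - Aη) (adjoint A w)‖ ≤ ‖A - Aη‖ * ‖adjoint A w‖ := le_opNorm _ _
        _ ≤ η * (δ / (2 * Real.sqrt α)) :=
          mul_le_mul hη hnAw (norm_nonneg _) hη0
    have h3 : η * (δ / (2 * Real.sqrt α)) / (2 * Real.sqrt α) = η * δ / (4 * α) := by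
      rw [show (4:ℝ) * α = (2 * Real.sqrt α) * (2 * Real.sqrt α) by linear_combination (-4 : ℝ) * hss]
      have hs0 : (2 * Real.sqrt α) ≠ 0 := by positivity
      field_simp
    calc ‖Ring.inverse Bη (adjoint Aη v)‖ ≤ ‖v‖ / (2 * Real.sqrt α) := h1
      _ ≤ η * (δ / (2 * Real.sqrt α)) / (2 * Real.sqrt α) :=
          (div_le_div_iff_of_pos_right (by positivity)).2 h2
      _ = η * δ / (4 * α) := h3
  have hb2 : ‖α • Ring.inverse Bη ((adjoint Aη - adjoint A) w)‖ ≤ η * δ / α := by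
    have h1 : ‖Ring.inverse Bη ((adjoint Aη - adjoint A) w)‖ ≤
        ‖(adjoint Aη - adjoint A) w‖ / α := by
      rw [hBη]; exact aux_norm_inv Aη α hα _
    have h2 : ‖(adjoint Aη - adjoint A) w‖ ≤ η * (δ / α) := by
      calc ‖(adjoint Aη - adjoint A) w‖ ≤ ‖adjoint Aη - adjoint A‖ * ‖w‖ := le_opNorm _ _
        _ ≤ η * (δ / α) := by
            refine mul_le_mul ?_ hnw (norm_nonneg _) hη0
            rw [← map_sub (ContinuousLinearMap.adjoint (𝕜 := ℝ) (E := X) (F := Y))]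
            rw [show ‖ContinuousLinearMap.adjoint (Aη - A)‖ = ‖Aη - A‖ from
              LinearIsometryEquiv.norm_map _ _]
            rwa [norm_sub_rev]
    rw [norm_smul, Real.norm_of_nonneg hα.le]
    calc α * ‖Ring.inverse Bη ((adjoint Aη - adjoint A) w)‖
        ≤ α * (‖(adjoint Aη - adjoint A) w‖ / α) := mul_le_mul_of_nonneg_left h1 hα.le
      _ = ‖(adjoint Aη - adjoint A) w‖ := by field_simp
      _ ≤ η * (δ / α) := h2
      _ = η * δ / α := by ring
  -- conclude
  calc ‖u‖ = ‖Ring.inverse Bη (adjoint Aη v) + α • Ring.inverse Bη ((adjoint Aη - adjoint A) w)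
      + adjoint A w‖ := by rw [hid, hsplit]
    _ ≤ ‖Ring.inverse Bη (adjoint Aη v)‖ + ‖α • Ring.inverse Bη ((adjoint Aη - adjoint A) w)‖
      + ‖adjoint A w‖ := norm_add₃_le
    _ ≤ η * δ / (4 * α) + η * δ / α + Cnc * (Real.sqrt α * ‖w‖) :=
        add_le_add (add_le_add hb1 hb2) hnc'
    _ = 5 / 4 * η * δ / α + Cnc * (Real.sqrt α * ‖w‖) := by
        field_simp
        ring
end

section
/- Let X, Y be Hilbert spaces, A, A_η : X → Y bounded with ‖A − A_η‖ ≤ η, α > 0, and x† ∈ X. With ψ_HD(α, B, z) = ‖√α (BB* + αI)⁻¹ z‖, there is a constant C (one may take C = 5/4) such that ψ_HD(α, A_η, A_η x†) ≤ C·η‖x†‖/√α + ψ_HD(α, A, A x†). -/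
/-!
Write `T_B = B B† + α`. If `T_A z = A x` and `T_{A'} y = A' x`, then
`T_{A'} (y - z) = (A' - A) (x - A† z) + A' (A - A')† z`.
Coercivity, `⟪T_B v, v⟫ = ‖B† v‖² + α ‖v‖²`, gives `‖T_B⁻¹‖ ≤ 1 / α` and `‖T_B⁻¹ B‖ ≤ 1 / (2 √α)`,
and `‖x - A† z‖ ≤ ‖x‖` because `A (x - A† z) = α z`. Hence
`‖y - z‖ ≤ η ‖x‖ / α + η ‖x‖ / (4 α)`, and the triangle inequality finishes after scaling by `√α`.
-/

open ContinuousLinearMap Filter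

variable {X Y : Type*} [NormedAddCommGroup X] [InnerProductSpace ℝ X] [CompleteSpace X]
  [NormedAddCommGroup Y] [InnerProductSpace ℝ Y] [CompleteSpace Y]

open RealInnerProductSpace

lemma ContinuousLinearMap.isInvertible_of_coercive {E : Type*} [NormedAddCommGroup E]
    [InnerProductSpace ℝ E] [CompleteSpace E] {T : E →L[ℝ] E} {c : ℝ} (hc : 0 < c)
    (hT : ∀ u, c * ‖u‖ ^ 2 ≤ ⟪T u, u⟫) : T.IsInvertible := by
  have hcoercive : IsCoercive (innerSL ℝ ∘L T) :=
    ⟨c, hc, fun u => by rw [mul_assoc, ← sq]; exact hT u⟩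
  exact ⟨hcoercive.continuousLinearEquivOfBilin, ext fun v => ext_inner_right ℝ fun w =>
    hcoercive.continuousLinearEquivOfBilin_apply v w⟩

noncomputable def shiftedGram (B : X →L[ℝ] Y) (α : ℝ) : Y →L[ℝ] Y :=
  B ∘L adjoint B + α • 1

section shiftedGram

variable (B : X →L[ℝ] Y) {α : ℝ}

lemma shiftedGram_apply (y : Y) : shiftedGram B α y = B (adjoint B y) + α • y := rfl

lemma inner_shiftedGram_apply_self (y : Y) :
    ⟪shiftedGram B α y, y⟫ = ‖adjoint B y‖ ^ 2 + α * ‖y‖ ^ 2 := by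
  rw [shiftedGram_apply, inner_add_left, ← adjoint_inner_right, real_inner_smul_left,
    real_inner_self_eq_norm_sq, real_inner_self_eq_norm_sq]

lemma isInvertible_shiftedGram (hα : 0 < α) : (shiftedGram B α).IsInvertible :=
  isInvertible_of_coercive hα fun y => by
    rw [inner_shiftedGram_apply_self]
    exact le_add_of_nonneg_left (sq_nonneg _)

lemma mul_norm_le_of_shiftedGram_apply_eq {r v : Y}
    (h : shiftedGram B α r = v) : α * ‖r‖ ≤ ‖v‖ := by
  rcases (norm_nonneg r).eq_or_lt with hr | hr
  · rw [← hr, mul_zero]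
    exact norm_nonneg v
  refine le_of_mul_le_mul_right ?_ hr
  calc α * ‖r‖ * ‖r‖ ≤ ⟪v, r⟫ := by
        rw [← h, inner_shiftedGram_apply_self]
        nlinarith [sq_nonneg ‖adjoint B r‖]
    _ ≤ ‖v‖ * ‖r‖ := real_inner_le_norm v r

lemma two_sqrt_mul_norm_le_of_shiftedGram_apply_eq (hα : 0 ≤ α) {r : Y} {u : X}
    (h : shiftedGram B α r = B u) : 2 * √α * ‖r‖ ≤ ‖u‖ := by
  have hinner : ‖adjoint B r‖ ^ 2 + α * ‖r‖ ^ 2 ≤ ‖u‖ * ‖adjoint B r‖ := by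
    rw [← inner_shiftedGram_apply_self, h, ← adjoint_inner_right]
    exact real_inner_le_norm u _
  -- AM-GM: `4 a (‖u‖ - a) ≤ ‖u‖ ^ 2` for `a = ‖B† r‖`
  have hsq : (2 * √α * ‖r‖) ^ 2 ≤ ‖u‖ ^ 2 := by
    rw [mul_pow, mul_pow, Real.sq_sqrt hα]
    nlinarith [sq_nonneg (‖u‖ - 2 * ‖adjoint B r‖)]
  exact (pow_le_pow_iff_left₀ (by positivity) (norm_nonneg u) two_ne_zero).mp hsq

lemma norm_sub_adjoint_apply_le_of_shiftedGram_apply_eq (hα : 0 ≤ α) {z : Y} {x : X}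
    (h : shiftedGram B α z = B x) : ‖x - adjoint B z‖ ≤ ‖x‖ := by
  set w := x - adjoint B z with hw_def
  have hBw : B w = α • z := by
    rw [map_sub, ← h, shiftedGram_apply]
    abel
  rcases (norm_nonneg w).eq_or_lt with hw | hw
  · rw [← hw]
    exact norm_nonneg x
  refine le_of_mul_le_mul_right ?_ hw
  calc ‖w‖ * ‖w‖ = ⟪x, w⟫ - α * ‖z‖ ^ 2 := by
        rw [← real_inner_self_eq_norm_mul_norm, ← real_inner_self_eq_norm_sq]
        nth_rw 1 [hw_def]
        rw [inner_sub_left, adjoint_inner_left, hBw, real_inner_smul_right]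
    _ ≤ ⟪x, w⟫ := sub_le_self _ (by positivity)
    _ ≤ ‖x‖ * ‖w‖ := real_inner_le_norm x w

lemma norm_inverse_shiftedGram_apply_le (hα : 0 < α) (v : Y) :
    ‖(shiftedGram B α).inverse v‖ ≤ ‖v‖ / α := by
  rw [le_div_iff₀ hα, mul_comm]
  exact mul_norm_le_of_shiftedGram_apply_eq B
    ((isInvertible_shiftedGram B hα).self_apply_inverse v)

lemma norm_inverse_shiftedGram_apply_apply_le (hα : 0 < α) (u : X) :
    ‖(shiftedGram B α).inverse (B u)‖ ≤ ‖u‖ / (2 * √α) := by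
  rw [le_div_iff₀ (by positivity), mul_comm]
  exact two_sqrt_mul_norm_le_of_shiftedGram_apply_eq B hα.le
    ((isInvertible_shiftedGram B hα).self_apply_inverse (B u))

end shiftedGram

lemma shiftedGram_apply_sub_eq {A A' : X →L[ℝ] Y} {α : ℝ} {x : X} {y z : Y}
    (hz : shiftedGram A α z = A x) (hy : shiftedGram A' α y = A' x) :
    shiftedGram A' α (y - z) = (A' - A) (x - adjoint A z) + A' (adjoint (A - A') z) := by
  rw [shiftedGram_apply] at hz
  rw [map_sub, hy, shiftedGram_apply]
  simp only [sub_apply, map_sub, ← hz]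
  abel

theorem norm_inverse_shiftedGram_apply_sub_le {A A' : X →L[ℝ] Y} {η α : ℝ}
    (hη : ‖A - A'‖ ≤ η) (hα : 0 < α) (x : X) :
    ‖(shiftedGram A' α).inverse (A' x) - (shiftedGram A α).inverse (A x)‖ ≤
      5 / 4 * η * ‖x‖ / α := by
  have hη₀ : 0 ≤ η := (norm_nonneg _).trans hη
  set T' := shiftedGram A' α
  have hT' : T'.IsInvertible := isInvertible_shiftedGram A' hα
  set z := (shiftedGram A α).inverse (A x)
  have hz : shiftedGram A α z = A x := (isInvertible_shiftedGram A hα).self_apply_inverse _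
  have hsplit : T'.inverse (A' x) - z =
      T'.inverse ((A' - A) (x - adjoint A z)) + T'.inverse (A' (adjoint (A - A') z)) := by
    rw [← map_add, ← shiftedGram_apply_sub_eq hz (hT'.self_apply_inverse _),
      hT'.inverse_apply_self]
  have h₁ : ‖T'.inverse ((A' - A) (x - adjoint A z))‖ ≤ η * ‖x‖ / α := calc
    _ ≤ ‖(A' - A) (x - adjoint A z)‖ / α := norm_inverse_shiftedGram_apply_le A' hα _
    _ ≤ η * ‖x‖ / α := by
      gcongr
      refine (le_of_opNorm_le _ (norm_sub_rev A A' ▸ hη) _).trans ?_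
      gcongr
      exact norm_sub_adjoint_apply_le_of_shiftedGram_apply_eq A hα.le hz
  have h₂ : ‖T'.inverse (A' (adjoint (A - A') z))‖ ≤ η * ‖x‖ / (4 * α) := calc
    _ ≤ ‖adjoint (A - A') z‖ / (2 * √α) := norm_inverse_shiftedGram_apply_apply_le A' hα _
    _ ≤ η * (‖x‖ / (2 * √α)) / (2 * √α) := by
      gcongr
      refine (le_of_opNorm_le _ ((LinearIsometryEquiv.norm_map _ _).trans_le hη) _).trans ?_
      gcongr
      exact norm_inverse_shiftedGram_apply_apply_le A hα x
    _ = η * ‖x‖ / (4 * α) := by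
      field_simp
      rw [Real.sq_sqrt hα.le]
      ring
  rw [hsplit]
  calc _ ≤ η * ‖x‖ / α + η * ‖x‖ / (4 * α) := (norm_add_le _ _).trans (add_le_add h₁ h₂)
    _ = 5 / 4 * η * ‖x‖ / α := by ring

theorem stmt_17 (A Aη : X →L[ℝ] Y) (η : ℝ) (hη : ‖A - Aη‖ ≤ η) (α : ℝ) (hα : 0 < α)
    (xdag : X) :
    Real.sqrt α * ‖(Ring.inverse (Aη ∘L adjoint Aη + α • (1 : Y →L[ℝ] Y))) (Aη xdag)‖ ≤
      5 / 4 * η * ‖xdag‖ / Real.sqrt α +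
        Real.sqrt α *
          ‖(Ring.inverse (A ∘L adjoint A + α • (1 : Y →L[ℝ] Y))) (A xdag)‖ := by
  rw [ringInverse_eq_inverse]
  change √α * ‖(shiftedGram Aη α).inverse (Aη xdag)‖ ≤
    _ + √α * ‖(shiftedGram A α).inverse (A xdag)‖
  set y := (shiftedGram Aη α).inverse (Aη xdag)
  set z := (shiftedGram A α).inverse (A xdag)
  have hscale : √α * (5 / 4 * η * ‖xdag‖ / α) = 5 / 4 * η * ‖xdag‖ / √α := by
    rw [eq_div_iff (by positivity)]
    field_simp
    rw [Real.sq_sqrt hα.le]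
    ring
  calc √α * ‖y‖ ≤ √α * (‖y - z‖ + ‖z‖) := by gcongr; exact norm_le_norm_sub_add y z
    _ ≤ √α * (5 / 4 * η * ‖xdag‖ / α + ‖z‖) := by
      gcongr
      exact norm_inverse_shiftedGram_apply_sub_le hη hα xdag
    _ = _ := by rw [mul_add, hscale]
end
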